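/- If a nontrivial group G admits a locally invariant total ordering, then G admits uncountably many locally invariant total orderings. -/

import Mathlib

/-!
The maximum `m` of a finite set `A` for a locally invariant order is an extremal point of `A`: no
`h ≠ 1` has both `h * m` and `h⁻¹ * m` in `A`. Removing extremal points one at a time and stacking
them on top ranks every finite set locally invariantly, and, since the maximum of `A⁻¹` yields a
second extremal point, the ranking can be made to put `g` below `g⁻¹` exactly for `g` in any
prescribed set `R` containing one element of each pair `{g, g⁻¹}`, `g ≠ 1`. An ultrafilter limit
of these finite rankings realises `R` by a locally invariant order on all of `G`. Such orders have
no torsion, so a fixed `g ≠ 1` has pairwise distinct pairs `{gⁿ, g⁻ⁿ}`, and flipping a given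
choice on any subfamily of them gives `2^ℵ₀` distinct choices `R`.
-/

open Filter Function
open scoped symmDiff

section

variable {G : Type*} [Group G]

structure IsLocallyInvariantOrder (r : G → G → Prop) : Prop where
  irrefl : ∀ g, ¬ r g g
  trans : ∀ a b c, r a b → r b c → r a c
  total : ∀ a b, a ≠ b → r a b ∨ r b a
  locallyInvariant : ∀ g h : G, h ≠ 1 → r g (h * g) ∨ r g (h⁻¹ * g)

structure IsSignChoice (R : Set G) : Prop where
  one_notMem : 1 ∉ R
  inv_mem_iff : ∀ g : G, g ≠ 1 → (g⁻¹ ∈ R ↔ g ∉ R)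

def signSet (r : G → G → Prop) : Set G := {g | r g g⁻¹}

def IsExtremalPoint (A : Set G) (a : G) : Prop :=
  ∀ h : G, h ≠ 1 → h * a ∈ A → h⁻¹ * a ∉ A

theorem IsExtremalPoint.of_inv {A : Set G} {a : G} (ha : IsExtremalPoint A⁻¹ a⁻¹) :
    IsExtremalPoint A a := by
  intro h hh h₁ h₂
  refine ha (a⁻¹ * h⁻¹ * a) (by simpa [mul_assoc, inv_mul_eq_one] using hh) ?_ ?_
  · rw [Set.mem_inv]
    convert h₁ using 1
    group
  · rw [Set.mem_inv]
    convert h₂ using 1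
    group

variable {r : G → G → Prop}

namespace IsLocallyInvariantOrder

theorem asymm (hr : IsLocallyInvariantOrder r) {a b : G} (hab : r a b) : ¬ r b a :=
  fun hba => hr.irrefl a (hr.trans a b a hab hba)

theorem exists_max (hr : IsLocallyInvariantOrder r) {A : Set G} (hA : A.Finite)
    (hne : A.Nonempty) : ∃ m ∈ A, ∀ a ∈ A, a ≠ m → r a m := by
  let : IsStrictOrder G r := { irrefl := hr.irrefl, trans := hr.trans }
  let := partialOrderOfSO r
  obtain ⟨m, hmA, hmax⟩ := hA.exists_maximal hne
  refine ⟨m, hmA, fun a ha ham => (hr.total a m ham).resolve_right fun hma => ?_⟩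
  exact (hmax ha (Or.inr hma)).elim ham (hr.asymm hma)

theorem isExtremalPoint_of_max (hr : IsLocallyInvariantOrder r) {A : Set G} {m : G}
    (hmax : ∀ a ∈ A, a ≠ m → r a m) : IsExtremalPoint A m := by
  intro h hh h₁ h₂
  rcases hr.locallyInvariant m h hh with hlt | hlt
  · exact hr.asymm hlt (hmax _ h₁ (mt mul_eq_right.mp hh))
  · exact hr.asymm hlt (hmax _ h₂ (mt mul_eq_right.mp (inv_ne_one.mpr hh)))

/-- In a finite cyclic group every element `a` has `g * a` and `g⁻¹ * a` as neighbours, so no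
point is extremal. -/
theorem not_isOfFinOrder (hr : IsLocallyInvariantOrder r) {g : G} (hg : g ≠ 1) :
    ¬ IsOfFinOrder g := by
  intro hfin
  obtain ⟨m, hm, hmax⟩ := hr.exists_max hfin.finite_zpowers ⟨1, one_mem _⟩
  exact hr.isExtremalPoint_of_max hmax g hg (mul_mem (Subgroup.mem_zpowers g) hm)
    (mul_mem (inv_mem (Subgroup.mem_zpowers g)) hm)

theorem inv_ne_self (hr : IsLocallyInvariantOrder r) {g : G} (hg : g ≠ 1) : g⁻¹ ≠ g := fun h =>
  hr.not_isOfFinOrder hg <| isOfFinOrder_iff_pow_eq_one.mpr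
    ⟨2, two_pos, by rw [pow_two]; nth_rw 1 [← h]; exact inv_mul_cancel g⟩

theorem isSignChoice_signSet (hr : IsLocallyInvariantOrder r) : IsSignChoice (signSet r) where
  one_notMem := by simpa [signSet] using hr.irrefl 1
  inv_mem_iff g hg := by
    simp only [signSet, Set.mem_ofPred_eq, inv_inv]
    exact ⟨hr.asymm, (hr.total _ _ (hr.inv_ne_self hg)).resolve_right⟩

theorem exists_isExtremalPoint_notMem_of_inv_mem (hr : IsLocallyInvariantOrder r) {R : Set G}
    (hR : IsSignChoice R) {A : Set G} (hA : A.Finite) (hne : A.Nonempty) :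
    ∃ m ∈ A, IsExtremalPoint A m ∧ (m⁻¹ ∈ A → m ∉ R) := by
  obtain ⟨m, hmA, hm⟩ := hr.exists_max hA hne
  obtain ⟨n, hnA, hn⟩ := hr.exists_max hA.inv hne.inv
  -- Both `m` and `n⁻¹` are extremal; if neither will do, they are mutually inverse and both in `R`.
  by_contra! hbad
  obtain ⟨hmi, hmR⟩ := hbad m hmA (hr.isExtremalPoint_of_max hm)
  obtain ⟨hni, hnR⟩ := hbad n⁻¹ hnA
    (IsExtremalPoint.of_inv (by rw [inv_inv]; exact hr.isExtremalPoint_of_max hn))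
  rw [inv_inv] at hni
  have hmn : m = n := by
    by_contra hmn
    exact hr.asymm (hn m hmi hmn) (hm n hni (Ne.symm hmn))
  subst hmn
  exact (hR.inv_mem_iff m (fun h => hR.one_notMem (h ▸ hmR))).mp hnR hmR

end IsLocallyInvariantOrder

structure IsLocallyInvariantRanking (R : Set G) (S : Finset G) (f : G → ℕ) : Prop where
  injOn : Set.InjOn f S
  locallyInvariant : ∀ g ∈ S, ∀ h : G, h ≠ 1 → h * g ∈ S → h⁻¹ * g ∈ S →
    f g < f (h * g) ∨ f g < f (h⁻¹ * g)
  sign : ∀ g ∈ S, g⁻¹ ∈ S → (f g < f g⁻¹ ↔ g ∈ R)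

theorem isLocallyInvariantRanking_empty (R : Set G) (f : G → ℕ) :
    IsLocallyInvariantRanking R ∅ f :=
  ⟨by simp, by simp, by simp⟩

theorem IsLocallyInvariantRanking.update_top [DecidableEq G] {R : Set G} (hR : IsSignChoice R)
    {S : Finset G} {m : G} (hm : m ∈ S) (hext : IsExtremalPoint (S : Set G) m)
    (hsign : m⁻¹ ∈ S → m ∉ R)
    {f : G → ℕ} (hf : IsLocallyInvariantRanking R (S.erase m) f) :
    IsLocallyInvariantRanking R S (update f m ((S.erase m).sup f + 1)) := by
  set f' := update f m ((S.erase m).sup f + 1)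
  have heq : ∀ a, a ≠ m → f' a = f a := fun a ham => update_of_ne ham _ _
  have htop : f' m = (S.erase m).sup f + 1 := update_self m _ f
  have hlt : ∀ a ∈ S, a ≠ m → f' a < f' m := by
    intro a ha ham
    rw [heq a ham, htop]
    exact Nat.lt_succ_of_le (Finset.le_sup (Finset.mem_erase.mpr ⟨ham, ha⟩))
  have hmem : ∀ {a}, a ≠ m → a ∈ S → a ∈ S.erase m := fun ham ha => Finset.mem_erase.mpr ⟨ham, ha⟩
  refine ⟨?_, ?_, ?_⟩
  · rw [← Finset.insert_erase hm, Finset.coe_insert, Set.injOn_insert (by simp)]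
    refine ⟨hf.injOn.congr fun a ha => (heq a (Finset.ne_of_mem_erase ha)).symm, ?_⟩
    rintro ⟨a, ha, hfa⟩
    exact (hlt a (Finset.mem_of_mem_erase ha) (Finset.ne_of_mem_erase ha)).ne hfa
  · intro g hg h hh h₁ h₂
    have hgm : g ≠ m := fun e => hext h hh (e ▸ h₁) (e ▸ h₂)
    by_cases h₁m : h * g = m
    · exact Or.inl (h₁m ▸ hlt g hg hgm)
    by_cases h₂m : h⁻¹ * g = m
    · exact Or.inr (h₂m ▸ hlt g hg hgm)
    rw [heq g hgm, heq _ h₁m, heq _ h₂m]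
    exact hf.locallyInvariant g (hmem hgm hg) h hh (hmem h₁m h₁) (hmem h₂m h₂)
  · intro g hg hgi
    by_cases hgm : g = m
    · subst hgm
      refine iff_of_false (fun hlt' => ?_) (hsign hgi)
      by_cases hinv : g⁻¹ = g
      · exact lt_irrefl _ (hinv ▸ hlt')
      · exact (hlt _ hgi hinv).asymm hlt'
    by_cases hgim : g⁻¹ = m
    · have hm1 : m ≠ 1 := by rintro rfl; exact hgm (inv_eq_one.mp hgim)
      have hgR : g ∈ R := by
        rw [← inv_inv g, hgim]
        exact (hR.inv_mem_iff m hm1).mpr (hsign (by rwa [← hgim, inv_inv]))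
      exact iff_of_true (hgim ▸ hlt g hg hgm) hgR
    rw [heq g hgm, heq _ hgim]
    exact hf.sign g (hmem hgm hg) (hmem hgim hgi)

theorem IsLocallyInvariantOrder.exists_isLocallyInvariantRanking
    (hr : IsLocallyInvariantOrder r) {R : Set G} (hR : IsSignChoice R) (S : Finset G) :
    ∃ f, IsLocallyInvariantRanking R S f := by
  classical
  induction S using Finset.strongInduction with
  | H S ih =>
    rcases S.eq_empty_or_nonempty with rfl | hS
    · exact ⟨0, isLocallyInvariantRanking_empty R 0⟩
    obtain ⟨m, hm, hext, hsign⟩ := hr.exists_isExtremalPoint_notMem_of_inv_mem hR S.finite_toSet hS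
    obtain ⟨f, hf⟩ := ih _ (Finset.erase_ssubset hm)
    exact ⟨_, hf.update_top hR hm hext hsign⟩

/-- Compactness: the rankings of finite sets converge along an ultrafilter finer than `atTop`. -/
theorem IsLocallyInvariantOrder.exists_signSet_eq (hr : IsLocallyInvariantOrder r) {R : Set G}
    (hR : IsSignChoice R) : ∃ r' : G → G → Prop, IsLocallyInvariantOrder r' ∧ signSet r' = R := by
  choose F hF using hr.exists_isLocallyInvariantRanking hR
  let U : Ultrafilter (Finset G) := .of atTop
  have hmem : ∀ a : G, ∀ᶠ S in (U : Filter (Finset G)), a ∈ S := fun a =>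
    Ultrafilter.of_le atTop ((eventually_ge_atTop {a}).mono fun _ => Finset.singleton_subset_iff.mp)
  refine ⟨fun a b => ∀ᶠ S in (U : Filter (Finset G)), F S a < F S b, ⟨?_, ?_, ?_, ?_⟩, ?_⟩
  · intro g hg
    obtain ⟨S, hS⟩ := hg.exists
    exact lt_irrefl _ hS
  · intro a b c hab hbc
    exact (hab.and hbc).mono fun S h => h.1.trans h.2
  · intro a b hab
    rw [← Ultrafilter.eventually_or]
    filter_upwards [hmem a, hmem b] with S ha hb
    exact lt_or_gt_of_ne fun e => hab ((hF S).injOn ha hb e)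
  · intro g h hh
    rw [← Ultrafilter.eventually_or]
    filter_upwards [hmem g, hmem (h * g), hmem (h⁻¹ * g)] with S h₀ h₁ h₂
    exact (hF S).locallyInvariant g h₀ h hh h₁ h₂
  · ext g
    refine (eventually_congr ?_).trans eventually_const
    filter_upwards [hmem g, hmem g⁻¹] with S h₀ h₁
    exact (hF S).sign g h₀ h₁

theorem IsSignChoice.symmDiff {R P : Set G} (hR : IsSignChoice R) (hP : ∀ g, g⁻¹ ∈ P ↔ g ∈ P)
    (h₁ : 1 ∉ P) : IsSignChoice (R ∆ P) where
  one_notMem := by simp [Set.mem_symmDiff, hR.one_notMem, h₁]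
  inv_mem_iff g hg := by
    simp only [Set.mem_symmDiff, hP, hR.inv_mem_iff g hg]
    tauto

def powerPairs (g : G) (A : Set ℕ) : Set G :=
  {x | ∃ n ∈ A, x = g ^ ((n : ℤ) + 1) ∨ x⁻¹ = g ^ ((n : ℤ) + 1)}

theorem inv_mem_powerPairs_iff {g x : G} {A : Set ℕ} :
    x⁻¹ ∈ powerPairs g A ↔ x ∈ powerPairs g A := by
  simp only [powerPairs, Set.mem_ofPred_eq, inv_inv, or_comm]

theorem one_notMem_powerPairs {g : G} (hg : ¬ IsOfFinOrder g) (A : Set ℕ) :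
    1 ∉ powerPairs g A := by
  rintro ⟨n, -, h⟩
  have h' : g ^ (0 : ℤ) = g ^ ((n : ℤ) + 1) := by
    rw [zpow_zero]
    exact h.elim id fun h => by rwa [inv_one] at h
  have := injective_zpow_iff_not_isOfFinOrder.mpr hg h'
  omega

theorem zpow_mem_powerPairs_iff {g : G} (hg : ¬ IsOfFinOrder g) {A : Set ℕ} (k : ℕ) :
    g ^ ((k : ℤ) + 1) ∈ powerPairs g A ↔ k ∈ A := by
  refine ⟨?_, fun hk => ⟨k, hk, Or.inl rfl⟩⟩
  rintro ⟨n, hn, h | h⟩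
  · have := injective_zpow_iff_not_isOfFinOrder.mpr hg h
    rwa [show k = n by omega]
  · rw [← zpow_neg] at h
    have := injective_zpow_iff_not_isOfFinOrder.mpr hg h
    omega

theorem powerPairs_injective {g : G} (hg : ¬ IsOfFinOrder g) : Injective (powerPairs g) :=
  fun A B h => Set.ext fun k => by
    rw [← zpow_mem_powerPairs_iff hg, h, zpow_mem_powerPairs_iff hg]

theorem IsSignChoice.not_countable_setOf {R : Set G} (hR : IsSignChoice R) {g : G}
    (hg : ¬ IsOfFinOrder g) : ¬ {R : Set G | IsSignChoice R}.Countable := by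
  intro hcount
  have hinj : Injective fun A => R ∆ powerPairs g A :=
    (symmDiff_right_injective R).comp (powerPairs_injective hg)
  have : (Set.univ : Set (Set ℕ)).Countable := (hcount.preimage hinj).mono fun A _ =>
    hR.symmDiff (fun _ => inv_mem_powerPairs_iff) (one_notMem_powerPairs hg A)
  have := Set.countable_univ_iff.mp this
  obtain ⟨e, he⟩ := exists_injective_nat (Set ℕ)
  exact cantor_injective e he

end

/-- If a nontrivial group admits a locally invariant total ordering,
it admits uncountably many. -/
theorem stmt15 {G : Type*} [Group G] [Nontrivial G]
    (h : ∃ r : G → G → Prop,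
      (∀ g : G, ¬ r g g) ∧
      (∀ a b c : G, r a b → r b c → r a c) ∧
      (∀ a b : G, a ≠ b → r a b ∨ r b a) ∧
      (∀ g h : G, h ≠ 1 → r g (h * g) ∨ r g (h⁻¹ * g))) :
    ¬ Set.Countable { r : G → G → Prop |
      (∀ g : G, ¬ r g g) ∧
      (∀ a b c : G, r a b → r b c → r a c) ∧
      (∀ a b : G, a ≠ b → r a b ∨ r b a) ∧
      (∀ g h : G, h ≠ 1 → r g (h * g) ∨ r g (h⁻¹ * g)) } := by
  obtain ⟨r, irrefl, trans, total, locallyInvariant⟩ := h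
  have hr : IsLocallyInvariantOrder r := ⟨irrefl, trans, total, locallyInvariant⟩
  obtain ⟨g, hg⟩ := exists_ne (1 : G)
  intro hcount
  refine hr.isSignChoice_signSet.not_countable_setOf (hr.not_isOfFinOrder hg)
    ((hcount.image signSet).mono fun R hR => ?_)
  obtain ⟨r', hr', rfl⟩ := hr.exists_signSet_eq hR
  exact ⟨r', ⟨hr'.irrefl, hr'.trans, hr'.total, hr'.locallyInvariant⟩, rfl⟩
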